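/- arXiv:1506.05733 — 2 statements merged into one kernel-verified Lean document; each statement's English description precedes it below -/
import Mathlib

section
/- Let N(λ) denote the number of triples (ℓ,m,n) of positive integers with ℓ²+m²+n² < λ. Then for all λ ≥ 3, N(λ) > (π/6)λ^{3/2} − (3π/4)λ + 3√(λ−2) − 1. -/
/-!
Attach to each counted lattice point `(ℓ, m, n)` the unit cube `[ℓ, ℓ+1) × [m, m+1) × [n, n+1)`.
These cubes cover the part of the octant ball `{x, y, z ≥ 0, x² + y² + z² < λ}` lying outside the
three unit slabs `{x < 1}`, `{y < 1}`, `{z < 1}`, so `N(λ)` is at least the volume of that part.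
By inclusion–exclusion this volume is the octant volume `(π/6) λ^{3/2}`, minus the three slabs
(one computed exactly as `(π/4)(λ - 1/3)`, the other two bounded by `πλ/4` by slicing), plus the
three pairwise intersections, each containing a box `1 × 1 × √(λ-2)`, minus the triple
intersection, which lies in the unit cube. The `π/12` gained from the exact slab makes the
inequality strict.
-/

open Real MeasureTheory Set intervalIntegral

theorem integral_sqrt_sq_sub_sq {r : ℝ} (hr : 0 ≤ r) :
    ∫ x in (0 : ℝ)..r, √(r ^ 2 - x ^ 2) = π * r ^ 2 / 4 :=
  calc
    _ = ∫ x in r * sin 0..r * sin (π / 2), √(r ^ 2 - x ^ 2) := by simp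
    _ = ∫ θ in (0 : ℝ)..π / 2, √(r ^ 2 - (r * sin θ) ^ 2) * (r * cos θ) :=
        (integral_comp_mul_deriv (fun θ _ => (hasDerivAt_sin θ).const_mul r)
          (by fun_prop) (by fun_prop)).symm
    _ = ∫ θ in (0 : ℝ)..π / 2, r ^ 2 * cos θ ^ 2 := by
        refine integral_congr fun θ hθ => ?_
        rw [uIcc_of_le (by positivity)] at hθ
        have hcos : 0 ≤ cos θ := cos_nonneg_of_mem_Icc ⟨by linarith [hθ.1, pi_pos], hθ.2⟩
        rw [show r ^ 2 - (r * sin θ) ^ 2 = (r * cos θ) ^ 2 by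
            linear_combination (-r ^ 2) * sin_sq_add_cos_sq θ,
          sqrt_sq (by positivity)]
        ring
    _ = π * r ^ 2 / 4 := by simp; ring

theorem integral_sqrt_sub_sq {ρ : ℝ} (hρ : 0 ≤ ρ) :
    ∫ x in (0 : ℝ)..√ρ, √(ρ - x ^ 2) = π * ρ / 4 := by
  simpa [sq_sqrt hρ] using integral_sqrt_sq_sub_sq (sqrt_nonneg ρ)

theorem integral_quarter_pi_mul_sub_sq (lam s : ℝ) :
    ∫ x in (0 : ℝ)..s, π * (lam - x ^ 2) / 4 = π / 4 * (lam * s - s ^ 3 / 3) := by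
  simp [integral_pow]
  ring

theorem setLIntegral_Ico_ofReal {f : ℝ → ℝ} {a b : ℝ} (hab : a ≤ b)
    (hf : ContinuousOn f (Icc a b)) (hf₀ : ∀ x ∈ Ico a b, 0 ≤ f x) :
    ∫⁻ x in Ico a b, ENNReal.ofReal (f x) = ENNReal.ofReal (∫ x in a..b, f x) := by
  rw [integral_of_le hab, ← integral_Ico_eq_integral_Ioc,
    ofReal_integral_eq_lintegral_ofReal (hf.integrableOn_Icc.mono_set Ico_subset_Icc_self)
      (ae_restrict_of_forall_mem measurableSet_Ico hf₀)]

theorem volume_eq_setLIntegral_preimage_mk {β : Type*} [MeasureSpace β]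
    [SFinite (volume : Measure β)] {S : Set (ℝ × β)} (hS : MeasurableSet S) {I : Set ℝ}
    (hSI : S ⊆ I ×ˢ univ) : volume S = ∫⁻ x in I, volume (Prod.mk x ⁻¹' S) := by
  rw [Measure.volume_eq_prod, Measure.prod_apply hS, setLIntegral_eq_of_support_subset]
  intro x hx
  obtain ⟨y, hy⟩ := nonempty_of_measure_ne_zero hx
  exact (hSI hy).1

theorem measureReal_union_union_inclusion_exclusion {α : Type*} [MeasurableSpace α] (μ : Measure α)
    [IsFiniteMeasure μ] {A B C : Set α} (hB : MeasurableSet B) (hC : MeasurableSet C) :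
    μ.real (A ∪ B ∪ C) + μ.real (A ∩ B) + μ.real (A ∩ C) + μ.real (B ∩ C)
      = μ.real A + μ.real B + μ.real C + μ.real (A ∩ B ∩ C) := by
  have hAB := measureReal_union_add_inter (μ := μ) (s := A) hB
  have hABC := measureReal_union_add_inter (μ := μ) (s := A ∪ B) hC
  have hAC_BC := measureReal_union_add_inter (μ := μ) (s := A ∩ C) (hB.inter hC)
  rw [union_inter_distrib_right] at hABC
  rw [show A ∩ C ∩ (B ∩ C) = A ∩ B ∩ C by ext; simp only [mem_inter_iff]; tauto] at hAC_BC
  linarith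

theorem measureReal_eq_compl_inter_add_inclusion_exclusion {α : Type*} [MeasurableSpace α]
    {μ : Measure α} {O A B C : Set α} (hO : MeasurableSet O) (hμO : μ O ≠ ⊤)
    (hA : MeasurableSet A) (hB : MeasurableSet B) (hC : MeasurableSet C) :
    μ.real O = μ.real ((A ∪ B ∪ C)ᶜ ∩ O)
      + μ.real (A ∩ O) + μ.real (B ∩ O) + μ.real (C ∩ O)
      - μ.real (A ∩ B ∩ O) - μ.real (A ∩ C ∩ O) - μ.real (B ∩ C ∩ O)
      + μ.real (A ∩ B ∩ C ∩ O) := by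
  have : IsFiniteMeasure (μ.restrict O) := isFiniteMeasure_restrict.2 hμO
  have hIE := measureReal_union_union_inclusion_exclusion (μ.restrict O) (A := A) hB hC
  have hsplit :=
    measureReal_add_measureReal_compl (μ := μ.restrict O) ((hA.union hB).union hC)
  simp only [measureReal_restrict_apply' hO, univ_inter] at hIE hsplit
  linarith

def quarterDisc (ρ : ℝ) : Set (ℝ × ℝ) := {q | 0 ≤ q.1 ∧ 0 ≤ q.2 ∧ q.1 ^ 2 + q.2 ^ 2 < ρ}

theorem measurableSet_quarterDisc (ρ : ℝ) : MeasurableSet (quarterDisc ρ) := by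
  unfold quarterDisc; measurability

theorem quarterDisc_subset (ρ : ℝ) : quarterDisc ρ ⊆ Ico 0 √ρ ×ˢ univ :=
  fun _ ⟨h₁, h₂, hlt⟩ => ⟨⟨h₁, lt_sqrt_of_sq_lt (by nlinarith)⟩, trivial⟩

theorem preimage_mk_quarterDisc {x : ℝ} (hx : 0 ≤ x) (ρ : ℝ) :
    Prod.mk x ⁻¹' quarterDisc ρ = Ico 0 √(ρ - x ^ 2) := by
  ext c
  simp only [quarterDisc, mem_preimage, mem_ofPred_eq, mem_Ico, hx, true_and]
  exact and_congr_right fun hc => by rw [lt_sqrt hc, lt_sub_iff_add_lt']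

theorem volume_quarterDisc {ρ : ℝ} (hρ : 0 ≤ ρ) :
    volume (quarterDisc ρ) = ENNReal.ofReal (π * ρ / 4) := by
  rw [volume_eq_setLIntegral_preimage_mk (measurableSet_quarterDisc ρ)
      (quarterDisc_subset ρ),
    setLIntegral_congr_fun measurableSet_Ico (g := fun x => ENNReal.ofReal √(ρ - x ^ 2))
      fun x hx => by rw [preimage_mk_quarterDisc hx.1, Real.volume_Ico, sub_zero],
    setLIntegral_Ico_ofReal (sqrt_nonneg ρ) (by fun_prop) fun _ _ => sqrt_nonneg _,
    integral_sqrt_sub_sq hρ]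

theorem volume_quarterDisc_inter_fst_lt_one_le (ρ : ℝ) :
    volume (quarterDisc ρ ∩ {q | q.1 < 1}) ≤ ENNReal.ofReal √ρ :=
  calc
    _ ≤ volume (Ico (0 : ℝ) 1 ×ˢ Ico 0 √ρ) := measure_mono <| by
        rintro q ⟨⟨h₁, h₂, hlt⟩, h₃⟩
        exact ⟨⟨h₁, h₃⟩, h₂, lt_sqrt_of_sq_lt (by nlinarith)⟩
    _ = ENNReal.ofReal √ρ := by simp [Measure.volume_eq_prod, Measure.prod_prod]

theorem volume_quarterDisc_inter_snd_lt_one_le (ρ : ℝ) :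
    volume (quarterDisc ρ ∩ {q | q.2 < 1}) ≤ ENNReal.ofReal √ρ :=
  calc
    _ ≤ volume (Ico 0 √ρ ×ˢ Ico (0 : ℝ) 1) := measure_mono <| by
        rintro q ⟨⟨h₁, h₂, hlt⟩, h₃⟩
        exact ⟨⟨h₁, lt_sqrt_of_sq_lt (by nlinarith)⟩, h₂, h₃⟩
    _ = ENNReal.ofReal √ρ := by simp [Measure.volume_eq_prod, Measure.prod_prod]

def octantBall (lam : ℝ) : Set (ℝ × ℝ × ℝ) :=
  {p | 0 ≤ p.1 ∧ 0 ≤ p.2.1 ∧ 0 ≤ p.2.2 ∧ p.1 ^ 2 + p.2.1 ^ 2 + p.2.2 ^ 2 < lam}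

theorem measurableSet_octantBall (lam : ℝ) : MeasurableSet (octantBall lam) := by
  unfold octantBall; measurability

theorem octantBall_subset (lam : ℝ) : octantBall lam ⊆ Ico 0 √lam ×ˢ univ :=
  fun _ ⟨h₁, h₂, h₃, hlt⟩ => ⟨⟨h₁, lt_sqrt_of_sq_lt (by nlinarith)⟩, trivial⟩

theorem preimage_mk_octantBall {x : ℝ} (hx : 0 ≤ x) (lam : ℝ) :
    Prod.mk x ⁻¹' octantBall lam = quarterDisc (lam - x ^ 2) := by
  ext q
  simp only [octantBall, quarterDisc, mem_preimage, mem_ofPred_eq, hx, true_and,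
    lt_sub_iff_add_lt', add_assoc]

theorem volume_preimage_mk_octantBall {x lam : ℝ} (hx : 0 ≤ x) (hxlam : x ^ 2 ≤ lam) :
    volume (Prod.mk x ⁻¹' octantBall lam) = ENNReal.ofReal (π * (lam - x ^ 2) / 4) := by
  rw [preimage_mk_octantBall hx, volume_quarterDisc (by linarith)]

theorem volume_octantBall {lam : ℝ} (hlam : 0 ≤ lam) :
    volume (octantBall lam) = ENNReal.ofReal (π / 6 * lam ^ ((3 : ℝ) / 2)) := by
  rw [volume_eq_setLIntegral_preimage_mk (measurableSet_octantBall lam)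
      (octantBall_subset lam),
    setLIntegral_congr_fun measurableSet_Ico fun x hx =>
      volume_preimage_mk_octantBall hx.1 ((lt_sqrt hx.1).1 hx.2).le,
    setLIntegral_Ico_ofReal (sqrt_nonneg lam) (by fun_prop) fun x hx => by
      have := ((lt_sqrt hx.1).1 hx.2).le; have := pi_pos; nlinarith,
    integral_quarter_pi_mul_sub_sq]
  have hcube : √lam ^ 3 = lam ^ ((3 : ℝ) / 2) := by
    rw [sqrt_eq_rpow, ← rpow_natCast, ← rpow_mul hlam]; norm_num
  rw [← hcube, show lam * √lam = √lam ^ 3 by rw [pow_succ, sq_sqrt hlam]]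
  ring_nf

theorem volume_octantBall_ne_top {lam : ℝ} (hlam : 0 ≤ lam) : volume (octantBall lam) ≠ ⊤ := by
  simp [volume_octantBall hlam]

theorem measureReal_octantBall {lam : ℝ} (hlam : 0 ≤ lam) :
    volume.real (octantBall lam) = π / 6 * lam ^ ((3 : ℝ) / 2) := by
  rw [measureReal_def, volume_octantBall hlam, ENNReal.toReal_ofReal (by positivity)]

theorem measureReal_fst_lt_one_inter_octantBall {lam : ℝ} (hlam : 1 ≤ lam) :
    volume.real ({p : ℝ × ℝ × ℝ | p.1 < 1} ∩ octantBall lam) = π / 4 * (lam - 1 / 3) := by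
  have hval : 0 ≤ π / 4 * (lam - 1 / 3) := by have := pi_pos; nlinarith
  rw [measureReal_def, ← ENNReal.toReal_ofReal hval]
  congr 1
  have hS : {p : ℝ × ℝ × ℝ | p.1 < 1} ∩ octantBall lam ⊆ Ico 0 1 ×ˢ univ :=
    fun p hp => ⟨⟨hp.2.1, hp.1⟩, trivial⟩
  have hsq : ∀ x ∈ Ico (0 : ℝ) 1, x ^ 2 ≤ lam := fun x hx => by nlinarith [hx.1, hx.2]
  rw [volume_eq_setLIntegral_preimage_mk
      ((measurableSet_lt measurable_fst measurable_const).inter (measurableSet_octantBall lam)) hS,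
    setLIntegral_congr_fun measurableSet_Ico
      (g := fun x => ENNReal.ofReal (π * (lam - x ^ 2) / 4)) fun x hx => by
        rw [preimage_inter, show Prod.mk x ⁻¹' {p : ℝ × ℝ × ℝ | p.1 < 1} = univ from
            eq_univ_of_forall fun _ => hx.2, univ_inter]
        exact volume_preimage_mk_octantBall hx.1 (hsq x hx),
    setLIntegral_Ico_ofReal zero_le_one (by fun_prop) fun x hx => by
      have := hsq x hx; have := pi_pos; nlinarith,
    integral_quarter_pi_mul_sub_sq]
  ring_nf

theorem measureReal_snd_mem_inter_octantBall_le {lam : ℝ} (hlam : 0 ≤ lam) {T : Set (ℝ × ℝ)}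
    (hT : MeasurableSet T) (hslice : ∀ ρ, volume (quarterDisc ρ ∩ T) ≤ ENNReal.ofReal √ρ) :
    volume.real ({p : ℝ × ℝ × ℝ | p.2 ∈ T} ∩ octantBall lam) ≤ π * lam / 4 := by
  refine ENNReal.toReal_le_of_le_ofReal (by positivity) ?_
  have hS : MeasurableSet {p : ℝ × ℝ × ℝ | p.2 ∈ T} := measurable_snd hT
  rw [volume_eq_setLIntegral_preimage_mk (hS.inter (measurableSet_octantBall lam))
      (inter_subset_right.trans (octantBall_subset lam)),
    ← integral_sqrt_sub_sq hlam,
    ← setLIntegral_Ico_ofReal (sqrt_nonneg lam) (by fun_prop) fun _ _ => sqrt_nonneg _]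
  refine setLIntegral_mono (by fun_prop) fun x hx => ?_
  rw [preimage_inter, preimage_mk_octantBall hx.1, inter_comm]
  exact hslice _

theorem Ico_prod_subset_octantBall {a b c lam : ℝ} (h : a ^ 2 + b ^ 2 + c ^ 2 ≤ lam) :
    Ico 0 a ×ˢ Ico 0 b ×ˢ Ico 0 c ⊆ octantBall lam := by
  rintro ⟨x, y, z⟩ ⟨⟨hx₀, hxa⟩, ⟨hy₀, hyb⟩, ⟨hz₀, hzc⟩⟩
  exact ⟨hx₀, hy₀, hz₀, by nlinarith⟩

theorem le_measureReal_inter_octantBall {a b c lam : ℝ} (ha : 0 ≤ a) (hb : 0 ≤ b) (hc : 0 ≤ c)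
    (h : a ^ 2 + b ^ 2 + c ^ 2 ≤ lam) {S : Set (ℝ × ℝ × ℝ)}
    (hS : Ico 0 a ×ˢ Ico 0 b ×ˢ Ico 0 c ⊆ S) :
    a * b * c ≤ volume.real (S ∩ octantBall lam) := by
  have hbox : volume.real (Ico 0 a ×ˢ Ico 0 b ×ˢ Ico 0 c) = a * b * c := by
    simp only [Measure.volume_eq_prod, measureReal_prod_prod, volume_real_Ico_of_le, *]
    ring
  rw [← hbox]
  exact measureReal_mono (subset_inter hS (Ico_prod_subset_octantBall h))
    (measure_ne_top_of_subset inter_subset_right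
      (volume_octantBall_ne_top (by nlinarith [sq_nonneg a, sq_nonneg b, sq_nonneg c])))

def unitCube (p : ℕ × ℕ × ℕ) : Set (ℝ × ℝ × ℝ) :=
  Ico (p.1 : ℝ) (p.1 + 1) ×ˢ Ico (p.2.1 : ℝ) (p.2.1 + 1) ×ˢ Ico (p.2.2 : ℝ) (p.2.2 + 1)

theorem volume_unitCube (p : ℕ × ℕ × ℕ) : volume (unitCube p) = 1 := by
  simp [unitCube, Measure.volume_eq_prod, Measure.prod_prod]

theorem mem_unitCube_floor {x : ℝ × ℝ × ℝ} (h₁ : 0 ≤ x.1) (h₂ : 0 ≤ x.2.1) (h₃ : 0 ≤ x.2.2) :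
    x ∈ unitCube (⌊x.1⌋₊, ⌊x.2.1⌋₊, ⌊x.2.2⌋₊) :=
  ⟨⟨Nat.floor_le h₁, Nat.lt_floor_add_one _⟩, ⟨Nat.floor_le h₂, Nat.lt_floor_add_one _⟩,
    ⟨Nat.floor_le h₃, Nat.lt_floor_add_one _⟩⟩

theorem volume_le_ncard_of_floor_mem {A : Set (ℝ × ℝ × ℝ)} {F : Set (ℕ × ℕ × ℕ)} (hF : F.Finite)
    (hA : ∀ x ∈ A, 0 ≤ x.1 ∧ 0 ≤ x.2.1 ∧ 0 ≤ x.2.2 ∧ (⌊x.1⌋₊, ⌊x.2.1⌋₊, ⌊x.2.2⌋₊) ∈ F) :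
    volume A ≤ F.ncard :=
  calc
    volume A ≤ volume (⋃ p ∈ hF.toFinset, unitCube p) := measure_mono fun x hx => by
        obtain ⟨h₁, h₂, h₃, hmem⟩ := hA x hx
        exact mem_biUnion (hF.mem_toFinset.2 hmem) (mem_unitCube_floor h₁ h₂ h₃)
    _ ≤ ∑ p ∈ hF.toFinset, volume (unitCube p) := measure_biUnion_finset_le _ _
    _ = F.ncard := by simp [volume_unitCube, ncard_eq_toFinset_card _ hF]

theorem measureReal_inter_octantBall_le_one (lam : ℝ) :
    volume.real
      ({p : ℝ × ℝ × ℝ | p.1 < 1} ∩ {p | p.2.1 < 1} ∩ {p | p.2.2 < 1} ∩ octantBall lam) ≤ 1 := by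
  have hsub : {p : ℝ × ℝ × ℝ | p.1 < 1} ∩ {p | p.2.1 < 1} ∩ {p | p.2.2 < 1} ∩ octantBall lam
      ⊆ unitCube 0 := by
    rintro p ⟨⟨⟨h₁, h₂⟩, h₃⟩, hp₁, hp₂, hp₃, -⟩
    simp_all [unitCube]
  calc
    _ ≤ volume.real (unitCube 0) := measureReal_mono hsub (by simp [volume_unitCube])
    _ = 1 := by simp [measureReal_def, volume_unitCube]

def positiveLatticePoints (lam : ℝ) : Set (ℕ × ℕ × ℕ) :=
  {p | 1 ≤ p.1 ∧ 1 ≤ p.2.1 ∧ 1 ≤ p.2.2 ∧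
    ((p.1 : ℝ) ^ 2 + (p.2.1 : ℝ) ^ 2 + (p.2.2 : ℝ) ^ 2) < lam}

theorem positiveLatticePoints_finite (lam : ℝ) : (positiveLatticePoints lam).Finite := by
  have hle : ∀ n : ℕ, (n : ℝ) ^ 2 < lam → n ≤ ⌈lam⌉₊ := fun n hn => by
    have : (n : ℝ) ≤ n ^ 2 := by exact_mod_cast Nat.le_self_pow two_ne_zero n
    exact_mod_cast this.trans (hn.le.trans (Nat.le_ceil lam))
  refine (finite_Iic (⌈lam⌉₊, ⌈lam⌉₊, ⌈lam⌉₊)).subset ?_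
  rintro ⟨l, m, n⟩ ⟨-, -, -, hlt⟩
  exact ⟨hle l (by nlinarith), hle m (by nlinarith), hle n (by nlinarith)⟩

theorem measureReal_compl_inter_octantBall_le_ncard (lam : ℝ) :
    volume.real
      (({p : ℝ × ℝ × ℝ | p.1 < 1} ∪ {p | p.2.1 < 1} ∪ {p | p.2.2 < 1})ᶜ ∩ octantBall lam)
      ≤ (positiveLatticePoints lam).ncard := by
  refine ENNReal.toReal_le_of_le_ofReal (Nat.cast_nonneg _) ?_
  rw [ENNReal.ofReal_natCast]
  refine volume_le_ncard_of_floor_mem (positiveLatticePoints_finite lam) ?_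
  rintro ⟨x, y, z⟩ ⟨hslab, hx₀, hy₀, hz₀, hlt⟩
  simp only [compl_union, mem_inter_iff, mem_compl_iff, mem_ofPred_eq, not_lt] at hslab
  obtain ⟨⟨hx, hy⟩, hz⟩ := hslab
  have hsq : ∀ t : ℝ, 0 ≤ t → (⌊t⌋₊ : ℝ) ^ 2 ≤ t ^ 2 := fun t ht =>
    pow_le_pow_left₀ (Nat.cast_nonneg _) (Nat.floor_le ht) 2
  refine ⟨hx₀, hy₀, hz₀, Nat.le_floor (by simpa), Nat.le_floor (by simpa),
    Nat.le_floor (by simpa), ?_⟩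
  linarith [hsq x hx₀, hsq y hy₀, hsq z hz₀]

theorem counting_function_lower_bound (lam : ℝ) (hlam : 3 ≤ lam) :
    (Nat.card {p : ℕ × ℕ × ℕ // 1 ≤ p.1 ∧ 1 ≤ p.2.1 ∧ 1 ≤ p.2.2 ∧
        ((p.1 : ℝ)^2 + (p.2.1 : ℝ)^2 + (p.2.2 : ℝ)^2) < lam} : ℝ)
      > π / 6 * lam ^ ((3 : ℝ) / 2) - 3 * π / 4 * lam + 3 * Real.sqrt (lam - 2) - 1 := by
  have hlam₀ : 0 ≤ lam := by linarith
  have hA : MeasurableSet {p : ℝ × ℝ × ℝ | p.1 < 1} := measurableSet_lt (by fun_prop) measurable_const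
  have hB : MeasurableSet {p : ℝ × ℝ × ℝ | p.2.1 < 1} := measurableSet_lt (by fun_prop) measurable_const
  have hC : MeasurableSet {p : ℝ × ℝ × ℝ | p.2.2 < 1} := measurableSet_lt (by fun_prop) measurable_const
  have hIE := measureReal_eq_compl_inter_add_inclusion_exclusion (measurableSet_octantBall lam)
    (volume_octantBall_ne_top hlam₀) hA hB hC
  have hO := measureReal_octantBall hlam₀
  have hX := measureReal_fst_lt_one_inter_octantBall (by linarith : (1 : ℝ) ≤ lam)
  have hY : volume.real ({p : ℝ × ℝ × ℝ | p.2.1 < 1} ∩ octantBall lam) ≤ π * lam / 4 :=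
    measureReal_snd_mem_inter_octantBall_le hlam₀ (measurableSet_lt (by fun_prop) measurable_const)
      volume_quarterDisc_inter_fst_lt_one_le
  have hZ : volume.real ({p : ℝ × ℝ × ℝ | p.2.2 < 1} ∩ octantBall lam) ≤ π * lam / 4 :=
    measureReal_snd_mem_inter_octantBall_le hlam₀ (measurableSet_lt (by fun_prop) measurable_const)
      volume_quarterDisc_inter_snd_lt_one_le
  have hs : √(lam - 2) ^ 2 = lam - 2 := sq_sqrt (by linarith)
  have hXY := le_measureReal_inter_octantBall (lam := lam) (S := {p | p.1 < 1} ∩ {p | p.2.1 < 1})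
    zero_le_one zero_le_one (sqrt_nonneg (lam - 2)) (by linarith) fun p hp => ⟨hp.1.2, hp.2.1.2⟩
  have hXZ := le_measureReal_inter_octantBall (lam := lam) (S := {p | p.1 < 1} ∩ {p | p.2.2 < 1})
    zero_le_one (sqrt_nonneg (lam - 2)) zero_le_one (by linarith) fun p hp => ⟨hp.1.2, hp.2.2.2⟩
  have hYZ := le_measureReal_inter_octantBall (lam := lam) (S := {p | p.2.1 < 1} ∩ {p | p.2.2 < 1})
    (sqrt_nonneg (lam - 2)) zero_le_one zero_le_one (by linarith) fun p hp => ⟨hp.2.1.2, hp.2.2.2⟩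
  have hXYZ := measureReal_inter_octantBall_le_one lam
  have hN := measureReal_compl_inter_octantBall_le_ncard lam
  show (Nat.card (positiveLatticePoints lam) : ℝ) > _
  rw [Nat.card_coe_set_eq]
  linarith [pi_pos]
end

section
/- If λ ≥ 3 is real and k is a positive integer such that k ≤ (3/(4π))λ^{3/2} and k > (π/6)λ^{3/2} − (3π/4)λ + 3√(λ−2), then λ ≤ 48.7. -/
open Real

/-!
With `s = √λ`, the two bounds on `k` give `(π/6 - 3/(4π)) s³ - (3π/4) s² + 3√(λ - 2) < 0`.
For `λ > 48.7` we have `s ≥ 6.9` and `√(λ - 2) ≥ 6.8`. Bounding the coefficients by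
`a = 0.2848` and `b = 2.3562`, the cubic part `s² (a s - b)` is increasing there and at least
about `-18.6`, while `3√(λ - 2) ≥ 20.4`.
-/

lemma rpow_three_halves_eq_sqrt_pow {x : ℝ} (hx : 0 ≤ x) : x ^ (3 / 2 : ℝ) = √x ^ 3 := by
  rw [sqrt_eq_rpow, ← rpow_natCast, ← rpow_mul hx]
  norm_num

lemma pi_div_six_sub_three_div_four_pi_gt : (0.2848 : ℝ) < π / 6 - 3 / (4 * π) := by
  have hπ := pi_gt_d6
  have : 3 / (4 * π) < 3 / (4 * 3.141592) := by gcongr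
  linarith

lemma mul_cube_sub_mul_sq_add_three_mul_pos {a b s t : ℝ} (ha : 0.2848 ≤ a) (hb : b ≤ 2.3562) (hs : 6.9 ≤ s)
    (ht : 6.8 ≤ t) : 0 < a * s ^ 3 - b * s ^ 2 + 3 * t := by
  have hs0 : 0 ≤ s - 6.9 := by linarith
  nlinarith [mul_nonneg (mul_nonneg hs0 hs0) hs0, mul_nonneg hs0 hs0,
    mul_le_mul_of_nonneg_right ha (pow_nonneg (by linarith : (0:ℝ) ≤ s) 3),
    mul_le_mul_of_nonneg_right hb (sq_nonneg s)]

theorem faberKrahn_bound_lt_latticePoint_bound {x : ℝ} (hx : 48.7 < x) :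
    3 / (4 * π) * x ^ (3 / 2 : ℝ) < π / 6 * x ^ (3 / 2 : ℝ) - 3 * π / 4 * x + 3 * √(x - 2) := by
  have hs : 6.9 ≤ √x := le_sqrt_of_sq_le (by linarith)
  have ht : 6.8 ≤ √(x - 2) := le_sqrt_of_sq_le (by linarith)
  have hb : 3 * π / 4 ≤ 2.3562 := by linarith [pi_lt_d6]
  have key := mul_cube_sub_mul_sq_add_three_mul_pos pi_div_six_sub_three_div_four_pi_gt.le hb hs ht
  rw [rpow_three_halves_eq_sqrt_pow (by linarith)]
  nth_rewrite 3 [← sq_sqrt (by linarith : (0 : ℝ) ≤ x)]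
  linarith

theorem lambda_le_48_7_general (lam : ℝ) (k : ℕ)
    (h1 : (k : ℝ) ≤ 3 / (4 * π) * lam ^ ((3 : ℝ) / 2))
    (h2 : (k : ℝ) > π / 6 * lam ^ ((3 : ℝ) / 2) - 3 * π / 4 * lam + 3 * Real.sqrt (lam - 2)) :
    lam ≤ 48.7 := by
  by_contra! h
  linarith [faberKrahn_bound_lt_latticePoint_bound h]

theorem lambda_le_48_7 (lam : ℝ) (hlam : 3 ≤ lam) (k : ℕ) (hk : 1 ≤ k)
    (h1 : (k : ℝ) ≤ 3 / (4 * π) * lam ^ ((3 : ℝ) / 2))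
    (h2 : (k : ℝ) > π / 6 * lam ^ ((3 : ℝ) / 2) - 3 * π / 4 * lam + 3 * Real.sqrt (lam - 2)) :
    lam ≤ 48.7 :=
  lambda_le_48_7_general lam k h1 h2
end
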